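/- arXiv:1605.05506 — 8 statements merged into one kernel-verified Lean document; each statement's English description precedes it below -/
import Mathlib

section
/- Let c ∈ ℝ and let v : ℝ → ℝ be a C² solution of v'' + c·v' + f(v) = 0 on ℝ with v(z) → 0 as z → -∞, v(z) → 1 as z → +∞, and such that v'(z) → 0 as z → ±∞ and v' ∈ L²(ℝ). Then c · ∫_{-∞}^{∞} v'(z)² dz = -F(1), where F(r) = ∫₀^r f(s) ds. In particular, if F(1) < 0 then c > 0. -/
/-!
Multiplying the equation by `v'` shows that the energy `E = v'² / 2 + F(v)` satisfies
`E' = -c v'²`. Since `v' ∈ L²`, integrating over `ℝ` gives `-c ∫ v'² = E(+∞) - E(-∞) = F(1) - F(0)`,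
and `F(0) = 0`.
-/

open Filter MeasureTheory Topology

noncomputable def waveEnergy (f v : ℝ → ℝ) (z : ℝ) : ℝ :=
  deriv v z ^ 2 / 2 + ∫ s in (0 : ℝ)..v z, f s

section WaveEnergy

variable {f v : ℝ → ℝ}

theorem hasDerivAt_waveEnergy {c : ℝ} (hf : Continuous f) (hv : ContDiff ℝ 2 v)
    (hode : ∀ z, deriv (deriv v) z + c * deriv v z + f (v z) = 0) (z : ℝ) :
    HasDerivAt (waveEnergy f v) (-c * deriv v z ^ 2) z := by
  have hv' : HasDerivAt v (deriv v z) z :=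
    (hv.differentiable (by norm_num)).differentiableAt.hasDerivAt
  have hv'' : HasDerivAt (deriv v) (deriv (deriv v) z) z :=
    ((contDiff_succ_iff_deriv.mp hv).2.2.differentiable one_ne_zero).differentiableAt.hasDerivAt
  have hF : HasDerivAt (fun z => ∫ s in (0 : ℝ)..v z, f s) (f (v z) * deriv v z) z :=
    (hf.integral_hasStrictDerivAt 0 (v z)).hasDerivAt.comp z hv'
  refine ((hv''.pow 2).div_const 2 |>.add hF).congr_deriv ?_
  rw [show f (v z) = -deriv (deriv v) z - c * deriv v z by linarith [hode z]]
  push_cast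
  ring

theorem tendsto_waveEnergy {l : Filter ℝ} {a : ℝ} (hf : Continuous f)
    (hv : Tendsto v l (𝓝 a)) (hdv : Tendsto (deriv v) l (𝓝 0)) :
    Tendsto (waveEnergy f v) l (𝓝 (∫ s in (0 : ℝ)..a, f s)) := by
  have hF : Continuous fun r => ∫ s in (0 : ℝ)..r, f s :=
    intervalIntegral.continuous_primitive (fun _ _ => hf.intervalIntegrable _ _) 0
  unfold waveEnergy
  simpa using ((hdv.pow 2).div_const 2).add (hF.tendsto a |>.comp hv)

theorem mul_integral_sq_deriv_eq_integral {c a b : ℝ} (hf : Continuous f) (hv : ContDiff ℝ 2 v)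
    (hode : ∀ z, deriv (deriv v) z + c * deriv v z + f (v z) = 0)
    (hbot : Tendsto v atBot (𝓝 a)) (htop : Tendsto v atTop (𝓝 b))
    (hdbot : Tendsto (deriv v) atBot (𝓝 0)) (hdtop : Tendsto (deriv v) atTop (𝓝 0))
    (hL2 : Integrable fun z => deriv v z ^ 2) :
    c * ∫ z, deriv v z ^ 2 = ∫ s in b..a, f s := by
  have h := integral_of_hasDerivAt_of_tendsto (hasDerivAt_waveEnergy hf hv hode)
    (hL2.const_mul (-c)) (tendsto_waveEnergy hf hbot hdbot) (tendsto_waveEnergy hf htop hdtop)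
  rw [integral_const_mul, intervalIntegral.integral_interval_sub_left
    (hf.intervalIntegrable _ _) (hf.intervalIntegrable _ _)] at h
  rw [intervalIntegral.integral_symm]
  linarith

end WaveEnergy

theorem stmt_1 (f : ℝ → ℝ) (c : ℝ) (v : ℝ → ℝ)
    (hf : Continuous f)
    (hv : ContDiff ℝ 2 v)
    (hode : ∀ z, deriv (deriv v) z + c * deriv v z + f (v z) = 0)
    (hbot : Tendsto v atBot (nhds 0)) (htop : Tendsto v atTop (nhds 1))
    (hdbot : Tendsto (deriv v) atBot (nhds 0))
    (hdtop : Tendsto (deriv v) atTop (nhds 0))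
    (hL2 : Integrable (fun z => (deriv v z) ^ 2)) :
    c * ∫ z : ℝ, (deriv v z) ^ 2 = -(∫ s in (0:ℝ)..1, f s) ∧
      ((∫ s in (0:ℝ)..1, f s) < 0 → 0 < c) := by
  have hspeed : c * ∫ z, deriv v z ^ 2 = -∫ s in (0 : ℝ)..1, f s := by
    rw [mul_integral_sq_deriv_eq_integral hf hv hode hbot htop hdbot hdtop hL2,
      intervalIntegral.integral_symm]
  refine ⟨hspeed, fun hneg => ?_⟩
  have hI : 0 ≤ ∫ z, deriv v z ^ 2 := integral_nonneg fun z => sq_nonneg _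
  exact pos_of_mul_pos_left (by linarith) hI
end

section
/- Let f satisfy hypothesis (H1): f continuous, f(0)=f(s₀)=f(1)=0 with 0<s₀<1, f<0 on (0,s₀)∪(1,∞), f>0 on (-∞,0)∪(s₀,1), and F(r)=∫₀^r f < 0 for all 0 < r ≤ 1. Let c > 0 and let v : ℝ → ℝ be a C² solution of v'' + c·v' + f(v) = 0 with limits 0 at -∞ and 1 at +∞. If z₀ ∈ ℝ satisfies v(z₀) = 0 and v'(z₀) = 0, and 0 ≤ v ≤ 1 on ℝ, then v(z) = 0 for all z ≤ z₀. -/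
/-!
The energy `E z = v'(z)² / 2 + F(v z)`, with `F r = ∫₀^r f`, satisfies `E' = -c v'²`, so it is
nonincreasing; it vanishes at `z₀`. If `v` were positive somewhere left of `z₀`, then, since
`v → 0` at `-∞` and `v z₀ = 0`, `v` would attain a positive maximum at some `w < z₀`. There
`v' w = 0`, so `E w = F (v w) < 0 = E z₀`, contradicting monotonicity.
-/

open Filter Set Topology

noncomputable def travellingWaveEnergy (f v : ℝ → ℝ) (z : ℝ) : ℝ :=
  deriv v z ^ 2 / 2 + ∫ s in (0 : ℝ)..v z, f s

section Energy

variable {f v : ℝ → ℝ} {c : ℝ}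

theorem hasDerivAt_travellingWaveEnergy (hf : Continuous f) (hv : ContDiff ℝ 2 v)
    (hode : ∀ z, deriv (deriv v) z + c * deriv v z + f (v z) = 0) (z : ℝ) :
    HasDerivAt (travellingWaveEnergy f v) (-c * deriv v z ^ 2) z := by
  have hv' : HasDerivAt v (deriv v z) z :=
    (hv.differentiable (by norm_num) z).hasDerivAt
  have hv'' : HasDerivAt (deriv v) (deriv (deriv v) z) z :=
    (hv.differentiable_deriv_two z).hasDerivAt
  have hkin : HasDerivAt (fun z ↦ deriv v z ^ 2 / 2) (deriv v z * deriv (deriv v) z) z :=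
    ((hv''.pow 2).div_const 2).congr_deriv (by ring)
  have hpot : HasDerivAt (fun z ↦ ∫ s in (0 : ℝ)..v z, f s) (f (v z) * deriv v z) z :=
    (hf.integral_hasStrictDerivAt 0 (v z)).hasDerivAt.comp z hv'
  exact (hkin.add hpot).congr_deriv (by linear_combination deriv v z * hode z)

theorem antitone_travellingWaveEnergy (hf : Continuous f) (hv : ContDiff ℝ 2 v) (hc : 0 ≤ c)
    (hode : ∀ z, deriv (deriv v) z + c * deriv v z + f (v z) = 0) :
    Antitone (travellingWaveEnergy f v) := by
  have hE := hasDerivAt_travellingWaveEnergy hf hv hode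
  refine antitone_of_deriv_nonpos (fun z ↦ (hE z).differentiableAt) fun z ↦ ?_
  rw [(hE z).deriv]
  nlinarith [sq_nonneg (deriv v z)]

end Energy

theorem exists_isLocalMax_lt_of_tendsto_atBot {v : ℝ → ℝ} {l z z₀ : ℝ} (hv : Continuous v)
    (hbot : Tendsto v atBot (𝓝 l)) (hlz : l < v z) (hz₀ : v z₀ ≤ l) (hzz₀ : z ≤ z₀) :
    ∃ w < z₀, v z ≤ v w ∧ IsLocalMax v w := by
  obtain ⟨a, ha⟩ := eventually_atBot.mp (hbot.eventually_lt_const hlz)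
  have hsmall : ∀ᶠ x in cocompact ℝ ⊓ 𝓟 (Iic z₀), v x ≤ v z := by
    refine mem_inf_principal.2 (mem_cocompact.2 ⟨Icc a z₀, isCompact_Icc, fun x hx hxz₀ ↦ ?_⟩)
    have hxa : x ≤ a := not_lt.1 fun hax ↦ hx ⟨hax.le, hxz₀⟩
    exact (ha x hxa).le
  obtain ⟨w, hwz₀, hmax⟩ :=
    hv.continuousOn.exists_isMaxOn' isClosed_Iic (mem_Iic.2 hzz₀) hsmall
  have hzw : v z ≤ v w := hmax (mem_Iic.2 hzz₀)
  have hwlt : w < z₀ := lt_of_le_of_ne hwz₀ (by rintro rfl; linarith)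
  exact ⟨w, hwlt, hzw, hmax.isLocalMax (Iic_mem_nhds hwlt)⟩

theorem stmt_3_general (f : ℝ → ℝ) (c : ℝ) (v : ℝ → ℝ) (z₀ : ℝ)
    (hf : Continuous f)
    (hF : ∀ r, 0 < r → r ≤ 1 → (∫ s in (0:ℝ)..r, f s) < 0)
    (hc : 0 < c)
    (hv : ContDiff ℝ 2 v)
    (hode : ∀ z, deriv (deriv v) z + c * deriv v z + f (v z) = 0)
    (hbot : Tendsto v atBot (nhds 0))
    (h01 : ∀ z, 0 ≤ v z ∧ v z ≤ 1)
    (hvz₀ : v z₀ = 0) (hdz₀ : deriv v z₀ = 0) :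
    ∀ z ≤ z₀, v z = 0 := by
  intro z hzz₀
  by_contra hvz
  have hvz_pos : 0 < v z := lt_of_le_of_ne (h01 z).1 (Ne.symm hvz)
  obtain ⟨w, hwz₀, hzw, hmax⟩ := exists_isLocalMax_lt_of_tendsto_atBot
    hv.continuous hbot hvz_pos hvz₀.le hzz₀
  have hEw : travellingWaveEnergy f v w < 0 := by
    simpa [travellingWaveEnergy, hmax.deriv_eq_zero] using
      hF (v w) (hvz_pos.trans_le hzw) (h01 w).2
  have hEz₀ : travellingWaveEnergy f v z₀ = 0 := by
    simp [travellingWaveEnergy, hvz₀, hdz₀]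
  have hmono := antitone_travellingWaveEnergy hf hv hc.le hode hwz₀.le
  linarith

theorem stmt_3 (f : ℝ → ℝ) (s₀ c : ℝ) (v : ℝ → ℝ) (z₀ : ℝ)
    (hf : Continuous f) (hs₀ : 0 < s₀) (hs₀1 : s₀ < 1)
    (hf0 : f 0 = 0) (hfs₀ : f s₀ = 0) (hf1 : f 1 = 0)
    (hneg : ∀ s, (s ∈ Ioo 0 s₀ ∨ s ∈ Ioi 1) → f s < 0)
    (hpos : ∀ s, (s ∈ Iio 0 ∨ s ∈ Ioo s₀ 1) → 0 < f s)
    (hF : ∀ r, 0 < r → r ≤ 1 → (∫ s in (0:ℝ)..r, f s) < 0)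
    (hc : 0 < c)
    (hv : ContDiff ℝ 2 v)
    (hode : ∀ z, deriv (deriv v) z + c * deriv v z + f (v z) = 0)
    (hbot : Tendsto v atBot (nhds 0)) (htop : Tendsto v atTop (nhds 1))
    (h01 : ∀ z, 0 ≤ v z ∧ v z ≤ 1)
    (hvz₀ : v z₀ = 0) (hdz₀ : deriv v z₀ = 0) :
    ∀ z ≤ z₀, v z = 0 :=
  stmt_3_general f c v z₀ hf hF hc hv hode hbot h01 hvz₀ hdz₀
end

section
/- Under the same hypotheses (f satisfying (H1), c > 0, v a C² solution of v'' + c·v' + f(v) = 0 with v → 0 at -∞, v → 1 at +∞, and 0 ≤ v ≤ 1 on ℝ): if z₁ ∈ ℝ satisfies v(z₁) = 1 and v'(z₁) = 0, then v(z) = 1 for all z ≥ z₁. -/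
open Filter Set Topology

/-!
Along a travelling wave the energy `E = v'² / 2 + F(v)`, with `F` a primitive of `f`, satisfies
`E' = -c v'² ≤ 0`. Since `v → 1` at `+∞`, the values of `E` decrease towards a limit at least
`F(1)`; but `E(z₁) = F(1)`, so `E` is constant on `[z₁, ∞)`. There `c v'² = -E' = 0`, hence `v'`
vanishes and `v` stays equal to `v(z₁) = 1`.
-/

namespace TravellingWave

noncomputable def energy (F v : ℝ → ℝ) (z : ℝ) : ℝ := deriv v z ^ 2 / 2 + F (v z)

variable {f F v : ℝ → ℝ} {c : ℝ}

theorem hasDerivAt_energy (hF : ∀ r, HasDerivAt F (f r) r) (hv : Differentiable ℝ v)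
    (hv' : Differentiable ℝ (deriv v))
    (hode : ∀ z, deriv (deriv v) z + c * deriv v z + f (v z) = 0) (z : ℝ) :
    HasDerivAt (energy F v) (-c * deriv v z ^ 2) z := by
  have hkinetic : HasDerivAt (fun z => deriv v z ^ 2 / 2) (deriv v z * deriv (deriv v) z) z := by
    refine (((hv' z).hasDerivAt.pow 2).div_const 2).congr_deriv ?_
    ring
  have hpotential : HasDerivAt (fun z => F (v z)) (f (v z) * deriv v z) z :=
    (hF (v z)).comp z (hv z).hasDerivAt
  refine (hkinetic.add hpotential).congr_deriv ?_
  linear_combination (deriv v z) * hode z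

theorem le_energy_of_tendsto_atTop (hanti : Antitone (energy F v)) {L : ℝ}
    (hF : ContinuousAt F L) (hv : Tendsto v atTop (𝓝 L)) (z : ℝ) : F L ≤ energy F v z := by
  refine le_of_tendsto ((hF.tendsto).comp hv) ?_
  filter_upwards [eventually_ge_atTop z] with w hw
  have hkinetic : 0 ≤ deriv v w ^ 2 / 2 := by positivity
  have := hanti hw
  simp only [energy, Function.comp_apply] at this ⊢
  linarith

variable (hE : ∀ z, HasDerivAt (energy F v) (-c * deriv v z ^ 2) z)
include hE

theorem antitone_energy (hc : 0 ≤ c) : Antitone (energy F v) :=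
  antitone_of_deriv_nonpos (fun z => (hE z).differentiableAt) fun z => by
    rw [(hE z).deriv]
    exact mul_nonpos_of_nonpos_of_nonneg (neg_nonpos.mpr hc) (sq_nonneg _)

theorem deriv_eq_zero_of_energy_eventuallyEq (hc : c ≠ 0) {z e : ℝ}
    (hconst : energy F v =ᶠ[𝓝 z] fun _ => e) : deriv v z = 0 := by
  have h : -c * deriv v z ^ 2 = 0 :=
    (hE z).unique ((hasDerivAt_const z e).congr_of_eventuallyEq hconst)
  simpa [hc] using h

end TravellingWave

theorem eqOn_Ici_of_deriv_eq_zero {v : ℝ → ℝ} {a : ℝ} (hv : Differentiable ℝ v)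
    (hderiv : ∀ z ∈ Ici a, deriv v z = 0) : ∀ z ∈ Ici a, v z = v a := fun z hz =>
  constant_of_has_deriv_right_zero hv.continuous.continuousOn
    (fun x hx => hderiv x hx.1 ▸ (hv x).hasDerivAt.hasDerivWithinAt) z ⟨hz, le_rfl⟩

open TravellingWave in
theorem stmt_4_general (f : ℝ → ℝ) (c : ℝ) (v : ℝ → ℝ) (z₁ : ℝ)
    (hf : Continuous f)
    (hc : 0 < c)
    (hv : ContDiff ℝ 2 v)
    (hode : ∀ z, deriv (deriv v) z + c * deriv v z + f (v z) = 0)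
    (htop : Tendsto v atTop (nhds 1))
    (hvz₁ : v z₁ = 1) (hdz₁ : deriv v z₁ = 0) :
    ∀ z, z₁ ≤ z → v z = 1 := by
  set F : ℝ → ℝ := fun r => ∫ s in (0:ℝ)..r, f s
  have hF : ∀ r, HasDerivAt F (f r) r := fun r => (hf.integral_hasStrictDerivAt 0 r).hasDerivAt
  have hv₁ : Differentiable ℝ v := hv.differentiable (by norm_num)
  have hE := hasDerivAt_energy hF hv₁ hv.differentiable_deriv_two hode
  have hanti := antitone_energy hE hc.le
  have hEz₁ : energy F v z₁ = F 1 := by simp [energy, hvz₁, hdz₁]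
  have hEconst : ∀ z, z₁ ≤ z → energy F v z = F 1 := fun z hz =>
    le_antisymm (hEz₁ ▸ hanti hz) (le_energy_of_tendsto_atTop hanti (hF 1).continuousAt htop z)
  have hderiv : ∀ z ∈ Ici z₁, deriv v z = 0 := by
    intro z hz
    rcases (mem_Ici.mp hz).eq_or_lt with rfl | hz
    · exact hdz₁
    · refine deriv_eq_zero_of_energy_eventuallyEq hE hc.ne' (e := F 1) ?_
      filter_upwards [Ioi_mem_nhds hz] with w hw using hEconst w hw.le
  exact fun z hz => hvz₁ ▸ eqOn_Ici_of_deriv_eq_zero hv₁ hderiv z hz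

theorem stmt_4 (f : ℝ → ℝ) (s₀ c : ℝ) (v : ℝ → ℝ) (z₁ : ℝ)
    (hf : Continuous f) (hs₀ : 0 < s₀) (hs₀1 : s₀ < 1)
    (hf0 : f 0 = 0) (hfs₀ : f s₀ = 0) (hf1 : f 1 = 0)
    (hneg : ∀ s, (s ∈ Ioo 0 s₀ ∨ s ∈ Ioi 1) → f s < 0)
    (hpos : ∀ s, (s ∈ Iio 0 ∨ s ∈ Ioo s₀ 1) → 0 < f s)
    (hF : ∀ r, 0 < r → r ≤ 1 → (∫ s in (0:ℝ)..r, f s) < 0)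
    (hc : 0 < c)
    (hv : ContDiff ℝ 2 v)
    (hode : ∀ z, deriv (deriv v) z + c * deriv v z + f (v z) = 0)
    (hbot : Tendsto v atBot (nhds 0)) (htop : Tendsto v atTop (nhds 1))
    (h01 : ∀ z, 0 ≤ v z ∧ v z ≤ 1)
    (hvz₁ : v z₁ = 1) (hdz₁ : deriv v z₁ = 0) :
    ∀ z, z₁ ≤ z → v z = 1 :=
  stmt_4_general f c v z₁ hf hc hv hode htop hvz₁ hdz₁
end

section
/- Let f satisfy (H1), c > 0, and let v : ℝ → ℝ be a C² solution of v'' + c·v' + f(v) = 0 with v → 0 at -∞ and v → 1 at +∞. Then there is no point ξ ∈ ℝ with v'(ξ) = 0 and s₀ ≤ v(ξ) < 1. -/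
/-!
Along a solution of `v'' + c v' + f(v) = 0` the energy `½ v'² + F(v)`, with `F` a primitive of
`f`, decreases at rate `c v'²`. If `v'(ξ) = 0`, letting `z → ∞` gives `F 1 ≤ F (v ξ)`; but
`F` is strictly increasing on `[v ξ, 1]` because `f > 0` on `(s₀, 1)`.
-/

open Filter Set Topology

section Energy

variable {f F v : ℝ → ℝ} {c : ℝ}

theorem hasDerivAt_energy (hF : ∀ r, HasDerivAt F (f r) r) (hv : ContDiff ℝ 2 v)
    (hode : ∀ z, deriv (deriv v) z + c * deriv v z + f (v z) = 0) (z : ℝ) :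
    HasDerivAt (fun z => deriv v z ^ 2 / 2 + F (v z)) (-(c * deriv v z ^ 2)) z := by
  have hv' : HasDerivAt v (deriv v z) z := (hv.differentiable two_ne_zero z).hasDerivAt
  have hv'' : HasDerivAt (deriv v) (deriv (deriv v) z) z :=
    (hv.differentiable_deriv_two z).hasDerivAt
  refine (((hv''.pow 2).div_const 2).add ((hF (v z)).comp z hv')).congr_deriv ?_
  linear_combination deriv v z * hode z

theorem antitone_energy (hF : ∀ r, HasDerivAt F (f r) r) (hv : ContDiff ℝ 2 v)
    (hode : ∀ z, deriv (deriv v) z + c * deriv v z + f (v z) = 0) (hc : 0 ≤ c) :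
    Antitone (fun z => deriv v z ^ 2 / 2 + F (v z)) :=
  antitone_of_hasDerivAt_nonpos (hasDerivAt_energy hF hv hode) fun z =>
    neg_nonpos.mpr (by positivity)

theorem le_of_deriv_eq_zero_of_tendsto_atTop (hF : ∀ r, HasDerivAt F (f r) r)
    (hv : ContDiff ℝ 2 v) (hode : ∀ z, deriv (deriv v) z + c * deriv v z + f (v z) = 0)
    (hc : 0 ≤ c) {ξ L : ℝ} (hξ : deriv v ξ = 0) (hL : Tendsto v atTop (𝓝 L)) :
    F L ≤ F (v ξ) := by
  have hbound : ∀ z, ξ ≤ z → F (v z) ≤ F (v ξ) := fun z hz => by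
    have := antitone_energy hF hv hode hc hz
    simp only [hξ] at this
    nlinarith [sq_nonneg (deriv v z)]
  exact le_of_tendsto ((hF L).continuousAt.tendsto.comp hL) (eventually_atTop.2 ⟨ξ, hbound⟩)

end Energy

theorem strictMonoOn_Icc_of_hasDerivAt_pos {f F : ℝ → ℝ} {a b : ℝ}
    (hF : ∀ r, HasDerivAt F (f r) r) (hf : ∀ r ∈ Ioo a b, 0 < f r) :
    StrictMonoOn F (Icc a b) := by
  refine strictMonoOn_of_hasDerivWithinAt_pos (convex_Icc a b)
    (fun r _ => (hF r).continuousAt.continuousWithinAt) (fun r _ => (hF r).hasDerivWithinAt) ?_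
  rwa [interior_Icc]

theorem stmt_5_general (f : ℝ → ℝ) (s₀ c : ℝ) (v : ℝ → ℝ)
    (hf : Continuous f)
    (hpos : ∀ s, (s ∈ Iio 0 ∨ s ∈ Ioo s₀ 1) → 0 < f s)
    (hc : 0 < c)
    (hv : ContDiff ℝ 2 v)
    (hode : ∀ z, deriv (deriv v) z + c * deriv v z + f (v z) = 0)
    (htop : Tendsto v atTop (nhds 1)) :
    ¬ ∃ ξ : ℝ, deriv v ξ = 0 ∧ s₀ ≤ v ξ ∧ v ξ < 1 := by
  rintro ⟨ξ, hξ, hs₀ξ, hξ1⟩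
  have hprim : ∀ r, HasDerivAt (fun r => ∫ s in (0:ℝ)..r, f s) (f r) r := fun r =>
    intervalIntegral.integral_hasDerivAt_right (hf.intervalIntegrable _ _)
      (hf.stronglyMeasurableAtFilter _ _) hf.continuousAt
  have hle := le_of_deriv_eq_zero_of_tendsto_atTop hprim hv hode hc.le hξ htop
  have hlt := strictMonoOn_Icc_of_hasDerivAt_pos hprim
    (fun r hr => hpos r (Or.inr ⟨hs₀ξ.trans_lt hr.1, hr.2⟩))
    (left_mem_Icc.mpr hξ1.le) (right_mem_Icc.mpr hξ1.le) hξ1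
  exact hle.not_gt hlt

theorem stmt_5 (f : ℝ → ℝ) (s₀ c : ℝ) (v : ℝ → ℝ)
    (hf : Continuous f) (hs₀ : 0 < s₀) (hs₀1 : s₀ < 1)
    (hf0 : f 0 = 0) (hfs₀ : f s₀ = 0) (hf1 : f 1 = 0)
    (hneg : ∀ s, (s ∈ Ioo 0 s₀ ∨ s ∈ Ioi 1) → f s < 0)
    (hpos : ∀ s, (s ∈ Iio 0 ∨ s ∈ Ioo s₀ 1) → 0 < f s)
    (hF : ∀ r, 0 < r → r ≤ 1 → (∫ s in (0:ℝ)..r, f s) < 0)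
    (hc : 0 < c)
    (hv : ContDiff ℝ 2 v)
    (hode : ∀ z, deriv (deriv v) z + c * deriv v z + f (v z) = 0)
    (hbot : Tendsto v atBot (nhds 0)) (htop : Tendsto v atTop (nhds 1)) :
    ¬ ∃ ξ : ℝ, deriv v ξ = 0 ∧ s₀ ≤ v ξ ∧ v ξ < 1 :=
  stmt_5_general f s₀ c v hf hpos hc hv hode htop
end

section
/- Let f satisfy (H1) and c > 0. Then every C² solution v : ℝ → ℝ of v'' + c·v' + f(v) = 0 with v → 0 at -∞ and v → 1 at +∞ satisfies v'(z) ≥ 0 for all z ∈ ℝ, and there exists an open interval (z₀, z₁) ⊆ ℝ (with -∞ ≤ z₀ < z₁ ≤ +∞) such that v' > 0 on (z₀, z₁), v(z) = 0 for all z ≤ z₀ (when z₀ > -∞), and v(z) = 1 for all z ≥ z₁ (when z₁ < +∞). -/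
/-!
Multiplying the equation by `v'` shows that the energy `E = v'² / 2 + F (v)`, with `F' = f`,
satisfies `E' = -c v'² ≤ 0`; since `v → 1`, also `E ≥ F 1` everywhere. The sign of `f` outside
`[0, 1]` and the maximum principle give `0 ≤ v ≤ 1`.

If `v' (a) < 0`, the maximum point `ζ` of `v` on `(-∞, a]` is a critical point with `f (v ζ) ≥ 0`,
so `v ζ ≥ s₀` and `E ζ = F (v ζ) ≤ F 1`; then `E` is constant after `ζ`, forcing `v' (a) = 0`.
If `v' (a) = 0` with `0 < v a < 1`, then `a` minimises `v'`, so `v'' (a) = 0`, `f (v a) = 0`,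
`v a = s₀` and `E a = F s₀ < F 1`, which is impossible. As `v` is monotone, `(z₀, z₁)` is the set
where `0 < v < 1`.
-/

open Filter Set Topology

theorem IsLocalMax.deriv_deriv_nonpos {g : ℝ → ℝ} {x : ℝ} (h : IsLocalMax g x)
    (hg : ContinuousAt g x) : deriv (deriv g) x ≤ 0 := by
  by_contra! hpos
  -- the second derivative test makes `x` a local minimum as well, so `g` is locally constant
  have hmin := isLocalMin_of_deriv_deriv_pos hpos h.deriv_eq_zero hg
  have hconst : g =ᶠ[𝓝 x] fun _ => g x :=
    (hmin.and h).mono fun _ hy => le_antisymm hy.2 hy.1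
  have : deriv (deriv g) x = 0 := by
    rw [hconst.deriv.deriv_eq, deriv_const', deriv_const]
  exact hpos.ne' this

theorem HasDerivAt.exists_lt_apply_lt_of_neg {g : ℝ → ℝ} {a d : ℝ} (h : HasDerivAt g d a)
    (hd : d < 0) : ∃ y < a, g a < g y := by
  have hslope := (hasDerivAt_iff_tendsto_slope_left_right.1 h).1
  obtain ⟨y, hy, hya⟩ :=
    ((hslope.eventually (eventually_lt_nhds hd)).and self_mem_nhdsWithin).exists
  refine ⟨y, hya, ?_⟩
  rw [slope_def_field] at hy
  rcases div_neg_iff.1 hy with h | h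
  · linarith [h.2, hya]
  · linarith [h.1]

theorem Continuous.exists_isMaxOn_Iic_of_tendsto_atBot {g : ℝ → ℝ} {l a y : ℝ}
    (hg : Continuous g) (hbot : Tendsto g atBot (𝓝 l)) (hya : y ≤ a) (hy : l < g y) :
    ∃ x ≤ a, IsMaxOn g (Iic a) x := by
  refine hg.continuousOn.exists_isMaxOn' (s := Iic a) isClosed_Iic hya ?_
  rw [eventually_inf_principal, cocompact_eq_atBot_atTop, eventually_sup]
  exact ⟨(hbot.eventually_lt_const hy).mono fun _ h _ => h.le,
    (eventually_gt_atTop a).mono fun _ h h' => absurd h' (not_le.2 h)⟩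

theorem IsLowerSet.exists_mem_iff_le_ereal {S : Set ℝ} (hl : IsLowerSet S) (hS : IsClosed S) :
    ∃ z₀ : EReal, ∀ z : ℝ, z ∈ S ↔ (z : EReal) ≤ z₀ := by
  by_cases hne : S.Nonempty
  · by_cases hbdd : BddAbove S
    · refine ⟨(sSup S : ℝ), fun z => ⟨fun hz => EReal.coe_le_coe_iff.2 (le_csSup hbdd hz),
        fun hz => hl (EReal.coe_le_coe_iff.1 hz) (hS.csSup_mem hne hbdd)⟩⟩
    · refine ⟨⊤, fun z => ⟨fun _ => le_top, fun _ => ?_⟩⟩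
      obtain ⟨w, hw, hzw⟩ := not_bddAbove_iff.1 hbdd z
      exact hl hzw.le hw
  · exact ⟨⊥, fun z => ⟨fun hz => (hne ⟨z, hz⟩).elim,
      fun hz => (EReal.coe_ne_bot z (le_bot_iff.1 hz)).elim⟩⟩

theorem IsUpperSet.exists_mem_iff_ereal_le {S : Set ℝ} (hu : IsUpperSet S) (hS : IsClosed S) :
    ∃ z₁ : EReal, ∀ z : ℝ, z ∈ S ↔ z₁ ≤ (z : EReal) := by
  by_cases hne : S.Nonempty
  · by_cases hbdd : BddBelow S
    · refine ⟨(sInf S : ℝ), fun z => ⟨fun hz => EReal.coe_le_coe_iff.2 (csInf_le hbdd hz),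
        fun hz => hu (EReal.coe_le_coe_iff.1 hz) (hS.csInf_mem hne hbdd)⟩⟩
    · refine ⟨⊥, fun z => ⟨fun _ => bot_le, fun _ => ?_⟩⟩
      obtain ⟨w, hw, hwz⟩ := not_bddBelow_iff.1 hbdd z
      exact hu hwz.le hw
  · exact ⟨⊤, fun z => ⟨fun hz => (hne ⟨z, hz⟩).elim,
      fun hz => (EReal.coe_ne_top z (top_le_iff.1 hz)).elim⟩⟩

theorem Monotone.exists_ereal_le_iff_and_le_iff {g : ℝ → ℝ} {a b : ℝ} (hg : Monotone g)
    (hc : Continuous g) (hab : a < b) (hbot : Tendsto g atBot (𝓝 a))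
    (htop : Tendsto g atTop (𝓝 b)) :
    ∃ z₀ z₁ : EReal, z₀ < z₁ ∧ (∀ z : ℝ, g z ≤ a ↔ (z : EReal) ≤ z₀) ∧
      ∀ z : ℝ, b ≤ g z ↔ z₁ ≤ (z : EReal) := by
  obtain ⟨z₀, hz₀⟩ := ((isLowerSet_Iic a).preimage hg).exists_mem_iff_le_ereal
    (isClosed_Iic.preimage hc)
  obtain ⟨z₁, hz₁⟩ := ((isUpperSet_Ici b).preimage hg).exists_mem_iff_ereal_le
    (isClosed_Ici.preimage hc)
  obtain ⟨m, hm⟩ : (a + b) / 2 ∈ range g := mem_range_of_exists_le_of_exists_ge hc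
    ((hbot.eventually_lt_const (by linarith)).mono fun _ => le_of_lt).exists
    ((htop.eventually_const_lt (by linarith)).mono fun _ => le_of_lt).exists
  have hz₀m : z₀ < m := not_le.1 fun h => by linarith [show g m ≤ a from (hz₀ m).2 h]
  have hz₁m : (m : EReal) < z₁ := not_le.1 fun h => by linarith [show b ≤ g m from (hz₁ m).2 h]
  exact ⟨z₀, z₁, hz₀m.trans hz₁m, hz₀, hz₁⟩

namespace TravelingWave

variable {f F v : ℝ → ℝ} {c : ℝ}

theorem le_of_neg_on_Ioi {u l₀ l₁ : ℝ} (hv : Continuous v)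
    (hode : ∀ z, deriv (deriv v) z + c * deriv v z + f (v z) = 0)
    (hbot : Tendsto v atBot (𝓝 l₀)) (htop : Tendsto v atTop (𝓝 l₁)) (h₀ : l₀ ≤ u)
    (h₁ : l₁ ≤ u) (hf : ∀ s ∈ Ioi u, f s < 0) (z : ℝ) : v z ≤ u := by
  by_contra! hz
  obtain ⟨x, hx⟩ := hv.exists_forall_ge' z <| by
    rw [cocompact_eq_atBot_atTop, eventually_sup]
    exact ⟨(hbot.eventually_lt_const (h₀.trans_lt hz)).mono fun _ => le_of_lt,
      (htop.eventually_lt_const (h₁.trans_lt hz)).mono fun _ => le_of_lt⟩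
  have hmax : IsLocalMax v x := IsMaxOn.isLocalMax (fun y _ => hx y) univ_mem
  have hode_x := hode x
  rw [hmax.deriv_eq_zero, mul_zero] at hode_x
  linarith [hmax.deriv_deriv_nonpos hv.continuousAt, hf _ (hz.trans_le (hx z))]

theorem ge_of_pos_on_Iio {u l₀ l₁ : ℝ} (hv : Continuous v)
    (hode : ∀ z, deriv (deriv v) z + c * deriv v z + f (v z) = 0)
    (hbot : Tendsto v atBot (𝓝 l₀)) (htop : Tendsto v atTop (𝓝 l₁)) (h₀ : u ≤ l₀)
    (h₁ : u ≤ l₁) (hf : ∀ s ∈ Iio u, 0 < f s) (z : ℝ) : u ≤ v z := by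
  have hode_neg (z : ℝ) :
      deriv (deriv (-v)) z + c * deriv (-v) z + (fun s => -f (-s)) ((-v) z) = 0 := by
    simp only [deriv.neg', deriv.fun_neg, Pi.neg_apply, neg_neg]
    linear_combination -hode z
  have := le_of_neg_on_Ioi hv.neg hode_neg hbot.neg htop.neg (neg_le_neg h₀) (neg_le_neg h₁)
    (fun s hs => neg_lt_zero.2 (hf (-s) (neg_lt.1 (mem_Ioi.1 hs)))) z
  simpa using this

/-- `F` plays the role of a primitive of the nonlinearity `f`. -/
noncomputable def energy (F v : ℝ → ℝ) (z : ℝ) : ℝ := deriv v z ^ 2 / 2 + F (v z)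

theorem hasDerivAt_energy {z : ℝ} (hF : HasDerivAt F (f (v z)) (v z))
    (hv : DifferentiableAt ℝ v z) (hv' : DifferentiableAt ℝ (deriv v) z)
    (hode : deriv (deriv v) z + c * deriv v z + f (v z) = 0) :
    HasDerivAt (energy F v) (-c * deriv v z ^ 2) z := by
  refine (((hv'.hasDerivAt.fun_pow 2).div_const 2).fun_add (hF.comp z hv.hasDerivAt)).congr_deriv ?_
  push_cast
  linear_combination deriv v z * hode

section
variable (hF : ∀ s, HasDerivAt F (f s) s) (hv : Differentiable ℝ v)
  (hv' : Differentiable ℝ (deriv v)) (hode : ∀ z, deriv (deriv v) z + c * deriv v z + f (v z) = 0)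
include hF hv hv' hode

theorem antitone_energy (hc : 0 ≤ c) : Antitone (energy F v) := by
  refine antitone_of_deriv_nonpos
    (fun z => (hasDerivAt_energy (hF _) (hv z) (hv' z) (hode z)).differentiableAt) fun z => ?_
  rw [(hasDerivAt_energy (hF _) (hv z) (hv' z) (hode z)).deriv]
  nlinarith [sq_nonneg (deriv v z)]

theorem le_energy_of_tendsto_atTop {L : ℝ} (hc : 0 ≤ c) (htop : Tendsto v atTop (𝓝 L)) (z : ℝ) :
    F L ≤ energy F v z :=
  le_of_tendsto (((hF L).continuousAt.tendsto).comp htop) <| eventually_atTop.2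
    ⟨z, fun w hw => (le_add_of_nonneg_left (by positivity) : F (v w) ≤ energy F v w).trans
      (antitone_energy hF hv hv' hode hc hw)⟩

/-- Once the energy has dropped to its limiting value `F L`, it is constant from then on, and
its derivative `-c v'²` forces `v' = 0`. -/
theorem deriv_eq_zero_of_energy_le {L ζ z : ℝ} (hc : 0 < c) (htop : Tendsto v atTop (𝓝 L))
    (hζ : energy F v ζ ≤ F L) (hz : ζ < z) : deriv v z = 0 := by
  have hconst : energy F v =ᶠ[𝓝 z] fun _ => energy F v ζ := by
    filter_upwards [Ioi_mem_nhds hz] with w hw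
    exact le_antisymm (antitone_energy hF hv hv' hode hc.le (le_of_lt hw))
      (hζ.trans (le_energy_of_tendsto_atTop hF hv hv' hode hc.le htop w))
  have h := (hasDerivAt_energy (hF _) (hv z) (hv' z) (hode z)).unique
    ((hasDerivAt_const z _).congr_of_eventuallyEq hconst)
  simpa [hc.ne'] using h

theorem deriv_nonneg {s₀ : ℝ} (hc : 0 < c) (hs₀1 : s₀ ≤ 1) (hneg : ∀ s ∈ Ioo 0 s₀, f s < 0)
    (hFmono : MonotoneOn F (Icc s₀ 1)) (hbot : Tendsto v atBot (𝓝 0))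
    (htop : Tendsto v atTop (𝓝 1)) (hv0 : ∀ z, 0 ≤ v z) (hv1 : ∀ z, v z ≤ 1) (a : ℝ) :
    0 ≤ deriv v a := by
  by_contra! ha
  obtain ⟨y, hya, hy⟩ := (hv a).hasDerivAt.exists_lt_apply_lt_of_neg ha
  obtain ⟨ζ, hζa, hζ⟩ :=
    hv.continuous.exists_isMaxOn_Iic_of_tendsto_atBot hbot hya.le ((hv0 a).trans_lt hy)
  have hyζ : v y ≤ v ζ := hζ hya.le
  have hζa' : ζ < a := hζa.lt_of_ne (by rintro rfl; linarith)
  have hmax : IsLocalMax v ζ := hζ.isLocalMax (Iic_mem_nhds hζa')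
  have hfζ : 0 ≤ f (v ζ) := by
    have h := hode ζ
    rw [hmax.deriv_eq_zero, mul_zero] at h
    linarith [hmax.deriv_deriv_nonpos hv.continuous.continuousAt]
  have hs₀ζ : s₀ ≤ v ζ := not_lt.1 fun h => (hneg _ ⟨by linarith [hv0 a], h⟩).not_ge hfζ
  have hE : energy F v ζ ≤ F 1 := by
    simpa [energy, hmax.deriv_eq_zero] using hFmono ⟨hs₀ζ, hv1 ζ⟩ ⟨hs₀1, le_rfl⟩ (hv1 ζ)
  exact ha.ne (deriv_eq_zero_of_energy_le hF hv hv' hode hc htop hE hζa')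

theorem deriv_pos_of_mem_Ioo {s₀ a : ℝ} (hc : 0 ≤ c) (hs₀1 : s₀ < 1)
    (hneg : ∀ s ∈ Ioo 0 s₀, f s < 0) (hpos : ∀ s ∈ Ioo s₀ 1, 0 < f s)
    (hFmono : StrictMonoOn F (Icc s₀ 1)) (htop : Tendsto v atTop (𝓝 1))
    (hnn : ∀ z, 0 ≤ deriv v z) (ha : v a ∈ Ioo 0 1) :
    0 < deriv v a := by
  refine (hnn a).lt_of_ne' fun h0 => ?_
  have hmin : IsLocalMin (deriv v) a := Eventually.of_forall fun z => h0 ▸ hnn z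
  have hfa : f (v a) = 0 := by
    have h := hode a
    rw [hmin.deriv_eq_zero, h0, mul_zero] at h
    linarith
  have hs₀ : v a = s₀ := by
    rcases lt_trichotomy (v a) s₀ with h | h | h
    · exact absurd hfa (hneg _ ⟨ha.1, h⟩).ne
    · exact h
    · exact absurd hfa (hpos _ ⟨h, ha.2⟩).ne'
  have hE : energy F v a = F s₀ := by simp [energy, h0, hs₀]
  linarith [le_energy_of_tendsto_atTop hF hv hv' hode hc htop a,
    hFmono ⟨le_rfl, hs₀1.le⟩ ⟨hs₀1.le, le_rfl⟩ hs₀1]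

end

end TravelingWave

theorem stmt_7_general (f : ℝ → ℝ) (s₀ c : ℝ) (v : ℝ → ℝ)
    (hf : Continuous f) (hs₀1 : s₀ < 1)
    (hneg : ∀ s, (s ∈ Ioo 0 s₀ ∨ s ∈ Ioi 1) → f s < 0)
    (hpos : ∀ s, (s ∈ Iio 0 ∨ s ∈ Ioo s₀ 1) → 0 < f s)
    (hc : 0 < c)
    (hv : ContDiff ℝ 2 v)
    (hode : ∀ z, deriv (deriv v) z + c * deriv v z + f (v z) = 0)
    (hbot : Tendsto v atBot (nhds 0)) (htop : Tendsto v atTop (nhds 1)) :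
    (∀ z, 0 ≤ deriv v z) ∧
    ∃ z₀ z₁ : EReal, z₀ < z₁ ∧
      (∀ z : ℝ, z₀ < (z : EReal) → (z : EReal) < z₁ → 0 < deriv v z) ∧
      (∀ z : ℝ, (z : EReal) ≤ z₀ → v z = 0) ∧
      (∀ z : ℝ, z₁ ≤ (z : EReal) → v z = 1) := by
  have hv₁ : Differentiable ℝ v := hv.differentiable (by norm_num)
  have hv₂ : Differentiable ℝ (deriv v) := hv.differentiable_deriv_two
  have hneg₀ : ∀ s ∈ Ioo 0 s₀, f s < 0 := fun s hs => hneg s (Or.inl hs)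
  have hpos₁ : ∀ s ∈ Ioo s₀ 1, 0 < f s := fun s hs => hpos s (Or.inr hs)
  have hF (s : ℝ) : HasDerivAt (fun r => ∫ t in (0 : ℝ)..r, f t) (f s) s :=
    (hf.integral_hasStrictDerivAt 0 s).hasDerivAt
  have hFmono : StrictMonoOn (fun r => ∫ t in (0 : ℝ)..r, f t) (Icc s₀ 1) :=
    strictMonoOn_of_hasDerivWithinAt_pos (convex_Icc _ _)
      (fun x _ => (hF x).continuousAt.continuousWithinAt) (fun x _ => (hF x).hasDerivWithinAt)
      (fun x hx => hpos₁ x (by rwa [interior_Icc] at hx))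
  have hv0 (z : ℝ) : 0 ≤ v z := TravelingWave.ge_of_pos_on_Iio hv₁.continuous hode hbot
    htop le_rfl zero_le_one (fun s hs => hpos s (Or.inl hs)) z
  have hv1 (z : ℝ) : v z ≤ 1 := TravelingWave.le_of_neg_on_Ioi hv₁.continuous hode hbot
    htop zero_le_one le_rfl (fun s hs => hneg s (Or.inr hs)) z
  have hnn := TravelingWave.deriv_nonneg hF hv₁ hv₂ hode hc hs₀1.le hneg₀ hFmono.monotoneOn
    hbot htop hv0 hv1
  obtain ⟨z₀, z₁, hz₀₁, hz₀, hz₁⟩ := (monotone_of_deriv_nonneg hv₁ hnn)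
    |>.exists_ereal_le_iff_and_le_iff hv₁.continuous zero_lt_one hbot htop
  refine ⟨hnn, z₀, z₁, hz₀₁, fun z h₀ h₁ => ?_, fun z hz => ?_, fun z hz => ?_⟩
  · refine TravelingWave.deriv_pos_of_mem_Ioo hF hv₁ hv₂ hode hc.le hs₀1 hneg₀ hpos₁ hFmono htop
      hnn ⟨?_, ?_⟩
    · exact not_le.1 fun h => h₀.not_ge ((hz₀ z).1 h)
    · exact not_le.1 fun h => h₁.not_ge ((hz₁ z).1 h)
  · exact le_antisymm ((hz₀ z).2 hz) (hv0 z)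
  · exact le_antisymm (hv1 z) ((hz₁ z).2 hz)

theorem stmt_7 (f : ℝ → ℝ) (s₀ c : ℝ) (v : ℝ → ℝ)
    (hf : Continuous f) (hs₀ : 0 < s₀) (hs₀1 : s₀ < 1)
    (hf0 : f 0 = 0) (hfs₀ : f s₀ = 0) (hf1 : f 1 = 0)
    (hneg : ∀ s, (s ∈ Ioo 0 s₀ ∨ s ∈ Ioi 1) → f s < 0)
    (hpos : ∀ s, (s ∈ Iio 0 ∨ s ∈ Ioo s₀ 1) → 0 < f s)
    (hF : ∀ r, 0 < r → r ≤ 1 → (∫ s in (0:ℝ)..r, f s) < 0)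
    (hc : 0 < c)
    (hv : ContDiff ℝ 2 v)
    (hode : ∀ z, deriv (deriv v) z + c * deriv v z + f (v z) = 0)
    (hbot : Tendsto v atBot (nhds 0)) (htop : Tendsto v atTop (nhds 1)) :
    (∀ z, 0 ≤ deriv v z) ∧
    ∃ z₀ z₁ : EReal, z₀ < z₁ ∧
      (∀ z : ℝ, z₀ < (z : EReal) → (z : EReal) < z₁ → 0 < deriv v z) ∧
      (∀ z : ℝ, (z : EReal) ≤ z₀ → v z = 0) ∧
      (∀ z : ℝ, z₁ ≤ (z : EReal) → v z = 1) :=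
  stmt_7_general f s₀ c v hf hs₀1 hneg hpos hc hv hode hbot htop
end

section
/- Suppose f : ℝ → ℝ is continuous, f(0) = 0, and there exist γ₀ > 0 and 0 < α₀ < 1 such that f(r)/r^{α₀} → -γ₀ as r → 0+. Let y : [0,1] → ℝ be a C¹ solution of y'(r) = -2(c·√(y(r)⁺) + f(r)) with y(0) = 0 and y > 0 on (0,1), and let z(U) = ∫_{s₀}^{U} dr/√(y(r)). Then the limit z₀ := lim_{U→0+} z(U) is finite, i.e., ∫_0^{s₀} dr/√(y(r)) < ∞. -/
/-!
Below the barrier `K r^(1+α₀)` with `K = γ₀ / (2(1+α₀))`, the drift term `c √y` is of order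
`r^((1+α₀)/2) = o(r^α₀)` because `α₀ < 1`, so the forcing `-2 f r ≈ 2 γ₀ r^α₀` makes `y` grow
strictly faster than the barrier. Hence `y` can never cross below it, `y r ≥ K r^(1+α₀)` near `0`,
and `1/√y ≤ K^(-1/2) r^(-(1+α₀)/2)` is integrable at `0` since `(1+α₀)/2 < 1`.
-/

open Filter Set MeasureTheory Topology

theorem nonneg_of_hasDerivAt_pos_of_neg {g g' : ℝ → ℝ} {a b : ℝ} (hg : ContinuousOn g (Icc a b))
    (ha : 0 ≤ g a) (hg' : ∀ x ∈ Ioo a b, g x < 0 → HasDerivAt g (g' x) x ∧ 0 < g' x) :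
    ∀ x ∈ Icc a b, 0 ≤ g x := by
  intro x₁ hx₁
  by_contra! hneg
  have hclosed : IsClosed (Icc a x₁ ∩ g ⁻¹' Ici 0) :=
    (hg.mono (Icc_subset_Icc_right hx₁.2)).preimage_isClosed_of_isClosed isClosed_Icc isClosed_Ici
  -- the last point of `[a, x₁]` where `g` is still nonnegative
  obtain ⟨x₀, ⟨hx₀, hgx₀⟩, hlast⟩ := (isCompact_Icc.of_isClosed_subset hclosed inter_subset_left
    |>.exists_isGreatest ⟨a, ⟨left_mem_Icc.2 hx₁.1, ha⟩⟩)
  have hlt : x₀ < x₁ := hx₀.2.lt_of_ne fun h => (h ▸ hgx₀ : 0 ≤ g x₁).not_gt hneg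
  have hneg' : ∀ x ∈ Ioo x₀ x₁, g x < 0 := fun x hx => by
    by_contra! h
    exact hx.1.not_ge (hlast ⟨⟨hx₀.1.trans hx.1.le, hx.2.le⟩, h⟩)
  have hsub : Ioo x₀ x₁ ⊆ Ioo a b := Ioo_subset_Ioo hx₀.1 hx₁.2
  obtain ⟨ξ, hξ, hslope⟩ := exists_hasDerivAt_eq_slope g g' hlt
    (hg.mono (Icc_subset_Icc hx₀.1 hx₁.2)) fun x hx => (hg' x (hsub hx) (hneg' x hx)).1
  have hpos := (hg' ξ (hsub hξ) (hneg' ξ hξ)).2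
  rw [hslope, div_pos_iff_of_pos_right (sub_pos.2 hlt)] at hpos
  linarith [show 0 ≤ g x₀ from hgx₀]

theorem mul_rpow_le_of_lt_deriv {y : ℝ → ℝ} {K p b : ℝ} (hp : 0 < p)
    (hy : ContinuousOn y (Icc 0 b)) (hy0 : 0 ≤ y 0)
    (hderiv : ∀ r ∈ Ioo 0 b, y r < K * r ^ p →
      DifferentiableAt ℝ y r ∧ K * (p * r ^ (p - 1)) < deriv y r) :
    ∀ r ∈ Icc 0 b, K * r ^ p ≤ y r := by
  have hbarrier : Continuous fun r : ℝ => K * r ^ p :=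
    continuous_const.mul (Real.continuous_rpow_const hp.le)
  intro r hr
  refine sub_nonneg.1 (nonneg_of_hasDerivAt_pos_of_neg (g := fun r => y r - K * r ^ p)
    (g' := fun r => deriv y r - K * (p * r ^ (p - 1))) (hy.sub hbarrier.continuousOn)
    (by simpa [Real.zero_rpow hp.ne'] using hy0) (fun x hx hneg => ?_) r hr)
  obtain ⟨hdiff, hslope⟩ := hderiv x hx (sub_neg.1 hneg)
  exact ⟨hdiff.hasDerivAt.sub ((Real.hasDerivAt_rpow_const (Or.inl hx.1.ne')).const_mul K),
    sub_pos.2 hslope⟩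

theorem eventually_lt_neg_two_mul_of_le_mul_rpow {f : ℝ → ℝ} {c γ α : ℝ} (K : ℝ) (hγ : 0 < γ)
    (hα : α < 1) (hasym : Tendsto (fun r => f r / r ^ α) (𝓝[>] 0) (𝓝 (-γ))) :
    ∀ᶠ r in 𝓝[>] 0, ∀ v, v ≤ K * r ^ (1 + α) → γ / 2 * r ^ α < -2 * (c * √v + f r) := by
  have hsmall : Tendsto (fun r : ℝ => 2 * |c| * √K * r ^ ((1 - α) / 2)) (𝓝[>] 0) (𝓝 0) := by
    have h : Tendsto (fun r : ℝ => r ^ ((1 - α) / 2)) (𝓝[>] 0) (𝓝 (0 ^ ((1 - α) / 2))) :=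
      (Real.continuousAt_rpow_const 0 _ (Or.inr (by linarith))).tendsto.mono_left
        nhdsWithin_le_nhds
    simpa [Real.zero_rpow (by linarith : (1 - α) / 2 ≠ 0)] using h.const_mul (2 * |c| * √K)
  filter_upwards [hasym.eventually_lt_const (by linarith : -γ < -(3 / 4 * γ)),
    hsmall.eventually_lt_const hγ, self_mem_nhdsWithin] with r hf hc (hr : 0 < r) v hv
  have hrα : 0 < r ^ α := Real.rpow_pos_of_pos hr α
  have hforcing : f r < -(3 / 4 * γ) * r ^ α := (div_lt_iff₀ hrα).1 hf
  have hsqrt : √v ≤ √K * r ^ ((1 - α) / 2) * r ^ α := calc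
    √v ≤ √(K * r ^ (1 + α)) := Real.sqrt_le_sqrt hv
    _ = √K * ((r ^ (1 + α)) ^ (1 / 2 : ℝ)) := by
      rw [Real.sqrt_mul' _ (by positivity), Real.sqrt_eq_rpow (r ^ (1 + α))]
    _ = √K * r ^ ((1 - α) / 2) * r ^ α := by
      rw [← Real.rpow_mul hr.le, mul_assoc, ← Real.rpow_add hr]
      ring_nf
  have hdrift : c * √v ≤ |c| * (√K * r ^ ((1 - α) / 2) * r ^ α) :=
    (mul_le_mul_of_nonneg_right (le_abs_self c) (Real.sqrt_nonneg v)).trans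
      (mul_le_mul_of_nonneg_left hsqrt (abs_nonneg c))
  have hdrift' : 2 * |c| * √K * r ^ ((1 - α) / 2) * r ^ α < γ * r ^ α :=
    mul_lt_mul_of_pos_right hc hrα
  nlinarith

theorem exists_mul_rpow_le_of_deriv_eq {f y : ℝ → ℝ} {c γ α b : ℝ} (hγ : 0 < γ) (hα : -1 < α)
    (hα1 : α < 1) (hasym : Tendsto (fun r => f r / r ^ α) (𝓝[>] 0) (𝓝 (-γ))) (hb : 0 < b)
    (hy : ContinuousOn y (Icc 0 b)) (hyd : DifferentiableOn ℝ y (Ioo 0 b)) (hy0 : 0 ≤ y 0)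
    (hode : ∀ r ∈ Ioo 0 b, deriv y r = -2 * (c * √(max (y r) 0) + f r)) :
    ∃ δ > 0, ∀ r ∈ Ioo 0 δ, γ / (2 * (1 + α)) * r ^ (1 + α) ≤ y r := by
  have hp : 0 < 1 + α := by linarith
  obtain ⟨δ, hδ, hrhs⟩ := (nhdsGT_basis 0).eventually_iff.1
    (eventually_lt_neg_two_mul_of_le_mul_rpow (c := c) (γ / (2 * (1 + α))) hγ hα1 hasym)
  refine ⟨min δ b, lt_min hδ hb, fun r hr => mul_rpow_le_of_lt_deriv hp
    (hy.mono (Icc_subset_Icc_right (min_le_right _ _))) hy0 (fun x hx hlt => ?_) r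
    (Ioo_subset_Icc_self hr)⟩
  have hxb : x ∈ Ioo 0 b := ⟨hx.1, hx.2.trans_le (min_le_right _ _)⟩
  have hK : 0 < γ / (2 * (1 + α)) * x ^ (1 + α) := by
    have := Real.rpow_pos_of_pos hx.1 (1 + α)
    positivity
  refine ⟨hyd.differentiableAt (Ioo_mem_nhds hxb.1 hxb.2), ?_⟩
  rw [hode x hxb, add_sub_cancel_left]
  convert hrhs ⟨hx.1, hx.2.trans_le (min_le_left _ _)⟩ _ (max_le hlt.le hK.le) using 1
  field_simp

theorem integrableOn_one_div_sqrt_of_mul_rpow_le {y : ℝ → ℝ} {K p δ s : ℝ} (hK : 0 < K)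
    (hp : p < 2) (hδ : 0 < δ) (hs : 0 < s) (hy : ContinuousOn y (Ioc 0 s))
    (hpos : ∀ r ∈ Ioc 0 s, 0 < y r) (hlow : ∀ r ∈ Ioo 0 δ, K * r ^ p ≤ y r) :
    IntegrableOn (fun r => 1 / √(y r)) (Ioo 0 s) := by
  set δ' := min δ s
  have hδ' : 0 < δ' := lt_min hδ hs
  have hcont : ContinuousOn (fun r => 1 / √(y r)) (Ioc 0 s) :=
    continuousOn_const.div hy.sqrt fun r hr => (Real.sqrt_pos.2 (hpos r hr)).ne'
  have hsplit : Ioo 0 s ⊆ Ioo 0 δ' ∪ Icc δ' s := fun x hx => by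
    rcases lt_or_ge x δ' with h | h
    exacts [Or.inl ⟨hx.1, h⟩, Or.inr ⟨h, hx.2.le⟩]
  refine IntegrableOn.mono_set (IntegrableOn.union ?_ ?_) hsplit
  · have hdom : IntegrableOn (fun r : ℝ => (√K)⁻¹ * r ^ (-(p / 2))) (Ioo 0 δ') :=
      ((intervalIntegral.integrableOn_Ioo_rpow_iff hδ').2 (by linarith)).const_mul _
    refine hdom.mono' ((hcont.mono fun x hx => ⟨hx.1, hx.2.le.trans (min_le_right _ _)⟩)
      |>.aestronglyMeasurable measurableSet_Ioo) ?_
    filter_upwards [ae_restrict_mem measurableSet_Ioo] with r hr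
    have hKr : 0 < √K * r ^ (p / 2) := mul_pos (Real.sqrt_pos.2 hK) (Real.rpow_pos_of_pos hr.1 _)
    have hsqrt : √K * r ^ (p / 2) ≤ √(y r) := calc
      √K * r ^ (p / 2) = √(K * r ^ p) := by
        rw [Real.sqrt_mul hK.le, Real.sqrt_eq_rpow (r ^ p), ← Real.rpow_mul hr.1.le, mul_one_div]
      _ ≤ √(y r) := Real.sqrt_le_sqrt (hlow r ⟨hr.1, hr.2.trans_le (min_le_left _ _)⟩)
    rw [Real.norm_eq_abs, abs_of_nonneg (by positivity), Real.rpow_neg hr.1.le, ← mul_inv,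
      ← one_div]
    exact one_div_le_one_div_of_le hKr hsqrt
  · exact (hcont.mono fun x hx => ⟨hδ'.trans_le hx.1, hx.2⟩).integrableOn_Icc

theorem stmt_9_general (f : ℝ → ℝ) (c γ₀ α₀ s₀ : ℝ) (y : ℝ → ℝ)
    (hγ₀ : 0 < γ₀) (hα₀ : 0 < α₀) (hα₀1 : α₀ < 1)
    (hasym : Tendsto (fun r => f r / r ^ α₀) (nhdsWithin 0 (Ioi 0)) (nhds (-γ₀)))
    (hs₀ : 0 < s₀) (hs₀1 : s₀ < 1)
    (hy : ContDiffOn ℝ 1 y (Icc 0 1)) (hy0 : y 0 = 0)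
    (hypos : ∀ r ∈ Ioo (0:ℝ) 1, 0 < y r)
    (hode : ∀ r ∈ Ioo (0:ℝ) 1,
      deriv y r = -2 * (c * Real.sqrt (max (y r) 0) + f r)) :
    IntegrableOn (fun r => 1 / Real.sqrt (y r)) (Ioo 0 s₀) := by
  obtain ⟨δ, hδ, hlow⟩ := exists_mul_rpow_le_of_deriv_eq hγ₀ (by linarith) hα₀1 hasym one_pos
    hy.continuousOn ((hy.differentiableOn one_ne_zero).mono Ioo_subset_Icc_self) hy0.ge hode
  have hIoc : Ioc 0 s₀ ⊆ Ioo 0 1 := Ioc_subset_Ioo_right hs₀1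
  exact integrableOn_one_div_sqrt_of_mul_rpow_le (by positivity) (by linarith) hδ hs₀
    (hy.continuousOn.mono (hIoc.trans Ioo_subset_Icc_self)) (fun r hr => hypos r (hIoc hr)) hlow

theorem stmt_9 (f : ℝ → ℝ) (c γ₀ α₀ s₀ : ℝ) (y : ℝ → ℝ)
    (hf : Continuous f) (hf0 : f 0 = 0)
    (hγ₀ : 0 < γ₀) (hα₀ : 0 < α₀) (hα₀1 : α₀ < 1)
    (hasym : Tendsto (fun r => f r / r ^ α₀) (nhdsWithin 0 (Ioi 0)) (nhds (-γ₀)))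
    (hs₀ : 0 < s₀) (hs₀1 : s₀ < 1)
    (hy : ContDiffOn ℝ 1 y (Icc 0 1)) (hy0 : y 0 = 0)
    (hypos : ∀ r ∈ Ioo (0:ℝ) 1, 0 < y r)
    (hode : ∀ r ∈ Ioo (0:ℝ) 1,
      deriv y r = -2 * (c * Real.sqrt (max (y r) 0) + f r)) :
    IntegrableOn (fun r => 1 / Real.sqrt (y r)) (Ioo 0 s₀) :=
  stmt_9_general f c γ₀ α₀ s₀ y hγ₀ hα₀ hα₀1 hasym hs₀ hs₀1 hy hy0 hypos hode
end

section
/- Suppose f : ℝ → ℝ is continuous with f(0) = f(s₀) = f(1) = 0 (0 < s₀ < 1), f < 0 on (0,s₀), f > 0 on (s₀,1), f is differentiable on (0,η*) ∪ {s₀} ∪ (1-η*,1) for some 0 < η* < (1/3)·min{s₀, 1-s₀}, f'(s₀) > 0, and f'(s) → -∞ as s → 0+ and as s → 1-. Then for every sufficiently small η > 0 there exist δ ∈ (0,η) and μ̲, μ̄ > 0 such that inf_{0 ≤ s ≤ δ} [f(s) - f(s+q)] ≥ μ̲·q for all q ∈ (0, s₀ - 2η], and inf_{1-δ ≤ s ≤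 1} [f(s-q) - f(s)] ≥ μ̄·q for all q ∈ (0, 1 - s₀ - 2η]. -/
open Filter Set

lemma mvt_aux' (f : ℝ → ℝ) (hf : Continuous f) (a b : ℝ) (hab : a < b)
    (hd : ∀ x ∈ Ioo a b, DifferentiableAt ℝ f x)
    (hder : ∀ x ∈ Ioo a b, deriv f x ≤ -1) : b - a ≤ f a - f b := by
  obtain ⟨c, hc, heq⟩ := exists_hasDerivAt_eq_slope f (deriv f) hab hf.continuousOn
    (fun x hx => (hd x hx).hasDerivAt)
  have h := hder c hc
  rw [heq] at h
  have hb : (0:ℝ) < b - a := by linarith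
  rw [div_le_iff₀ hb] at h
  linarith


theorem stmt_13 (f : ℝ → ℝ) (s₀ ηs : ℝ)
    (hf : Continuous f) (hs₀ : 0 < s₀) (hs₀1 : s₀ < 1)
    (hf0 : f 0 = 0) (hfs₀ : f s₀ = 0) (hf1 : f 1 = 0)
    (hneg : ∀ s ∈ Ioo 0 s₀, f s < 0)
    (hpos : ∀ s ∈ Ioo s₀ 1, 0 < f s)
    (hηs : 0 < ηs) (hηs' : ηs < (1/3) * min s₀ (1 - s₀))
    (hdiff0 : ∀ s ∈ Ioo 0 ηs, DifferentiableAt ℝ f s)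
    (hdiffs₀ : DifferentiableAt ℝ f s₀)
    (hdiff1 : ∀ s ∈ Ioo (1 - ηs) 1, DifferentiableAt ℝ f s)
    (hds₀ : 0 < deriv f s₀)
    (hd0 : Tendsto (fun s => deriv f s) (nhdsWithin 0 (Ioi 0)) atBot)
    (hd1 : Tendsto (fun s => deriv f s) (nhdsWithin 1 (Iio 1)) atBot) :
    ∃ η₀ > (0:ℝ), ∀ η : ℝ, 0 < η → η ≤ η₀ →
      ∃ δ μ₁ μ₂ : ℝ, 0 < δ ∧ δ < η ∧ 0 < μ₁ ∧ 0 < μ₂ ∧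
        (∀ s q : ℝ, 0 ≤ s → s ≤ δ → 0 < q → q ≤ s₀ - 2 * η →
          μ₁ * q ≤ f s - f (s + q)) ∧
        (∀ s q : ℝ, 1 - δ ≤ s → s ≤ 1 → 0 < q → q ≤ 1 - s₀ - 2 * η →
          μ₂ * q ≤ f (s - q) - f s) := by
  have hmin1 : ηs < (1/3) * s₀ := lt_of_lt_of_le hηs' (by
    have := min_le_left s₀ (1 - s₀); nlinarith)
  have hmin2 : ηs < (1/3) * (1 - s₀) := lt_of_lt_of_le hηs' (by
    have := min_le_right s₀ (1 - s₀); nlinarith)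
  -- steep region near 0
  have h1 : ∀ᶠ s in nhdsWithin 0 (Ioi 0), deriv f s ≤ -1 :=
    hd0.eventually (eventually_le_atBot (-1))
  obtain ⟨u, hu, huset⟩ := mem_nhdsGT_iff_exists_Ioo_subset.mp h1
  simp only [mem_Ioi] at hu
  -- steep region near 1
  have h2 : ∀ᶠ s in nhdsWithin 1 (Iio 1), deriv f s ≤ -1 :=
    hd1.eventually (eventually_le_atBot (-1))
  obtain ⟨l, hl, hlset⟩ := mem_nhdsLT_iff_exists_Ioo_subset.mp h2
  simp only [mem_Iio] at hl
  set θ : ℝ := min u ηs with hθdef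
  have hθpos : 0 < θ := lt_min hu hηs
  have hθu : θ ≤ u := min_le_left _ _
  have hθηs : θ ≤ ηs := min_le_right _ _
  set a : ℝ := max l (1 - ηs) with hadef
  have hal : l ≤ a := le_max_left _ _
  have haηs : 1 - ηs ≤ a := le_max_right _ _
  have ha1 : a < 1 := max_lt hl (by linarith)
  have has₀ : s₀ < a := by
    have : s₀ < 1 - ηs := by linarith
    linarith [le_max_right l (1 - ηs)]
  refine ⟨min (s₀ - θ) (a - s₀), lt_min (by linarith) (by linarith), ?_⟩
  intro η hη hηle
  have hη1 : η ≤ s₀ - θ := le_trans hηle (min_le_left _ _)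
  have hη2 : η ≤ a - s₀ := le_trans hηle (min_le_right _ _)
  -- max of f on [θ, s₀ - η]
  obtain ⟨x, hxmem, hxmax⟩ := isCompact_Icc.exists_isMaxOn
    (nonempty_Icc.mpr (by linarith : θ ≤ s₀ - η)) hf.continuousOn
  have hm1 : f x < 0 := hneg x ⟨lt_of_lt_of_le hθpos hxmem.1, by
    have := hxmem.2; linarith⟩
  -- min of f on [s₀ + η, a]
  obtain ⟨y, hymem, hymin⟩ := isCompact_Icc.exists_isMinOn
    (nonempty_Icc.mpr (by linarith : s₀ + η ≤ a)) hf.continuousOn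
  have hm2 : 0 < f y := hpos y ⟨by have := hymem.1; linarith, lt_of_le_of_lt hymem.2 ha1⟩
  -- continuity at 0 and 1
  have hc0 : ∀ᶠ s in nhds (0:ℝ), f x / 2 < f s := by
    apply (hf.tendsto 0).eventually
    apply eventually_gt_nhds
    rw [hf0]; linarith
  have hc1 : ∀ᶠ s in nhds (1:ℝ), f s < f y / 2 := by
    have h := eventually_lt_nhds (show f 1 < f y / 2 by rw [hf1]; linarith)
    exact (hf.tendsto 1).eventually h
  obtain ⟨ε₁, hε₁, hball₁⟩ := Metric.eventually_nhds_iff.mp hc0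
  obtain ⟨ε₂, hε₂, hball₂⟩ := Metric.eventually_nhds_iff.mp hc1
  set δ : ℝ := min (min (ε₁ / 2) (ε₂ / 2)) (η / 2) with hδdef
  have hδpos : 0 < δ := lt_min (lt_min (by linarith) (by linarith)) (by linarith)
  have hδη : δ ≤ η / 2 := min_le_right _ _
  have hδε₁ : δ ≤ ε₁ / 2 := le_trans (min_le_left _ _) (min_le_left _ _)
  have hδε₂ : δ ≤ ε₂ / 2 := le_trans (min_le_left _ _) (min_le_right _ _)
  refine ⟨δ, min 1 (-f x / (2 * s₀)), min 1 (f y / (2 * (1 - s₀))),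
    hδpos, by linarith, lt_min one_pos (div_pos (by linarith) (by linarith)),
    lt_min one_pos (div_pos (by linarith) (by linarith)), ?_, ?_⟩
  · -- left inequality
    intro s q hs0 hsδ hq hqle
    by_cases hcase : s + q ≤ θ
    · -- MVT case
      have hmvt := mvt_aux' f hf s (s + q) (by linarith)
        (fun z hz => hdiff0 z ⟨lt_of_le_of_lt hs0 hz.1, by
          have h2 := hz.2
          linarith⟩)
        (fun z hz => huset ⟨lt_of_le_of_lt hs0 hz.1, by
          have h2 := hz.2
          linarith⟩)
      have : min 1 (-f x / (2 * s₀)) * q ≤ 1 * q :=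
        mul_le_mul_of_nonneg_right (min_le_left _ _) (le_of_lt hq)
      linarith
    · -- far case
      push_neg at hcase
      have hsq : s + q ∈ Icc θ (s₀ - η) := ⟨le_of_lt hcase, by
        have : s ≤ η / 2 := le_trans hsδ hδη; linarith⟩
      have hfsq : f (s + q) ≤ f x := hxmax hsq
      have hfs : f x / 2 < f s := hball₁ (by
        rw [Real.dist_eq]; rw [abs_of_nonneg (by linarith : (0:ℝ) ≤ s - 0)]
        simp only [sub_zero]; linarith)
      have hq2 : q ≤ s₀ := by linarith
      have hfactor : min 1 (-f x / (2 * s₀)) * q ≤ (-f x / (2 * s₀)) * s₀ := by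
        apply mul_le_mul (min_le_right _ _) hq2 (le_of_lt hq)
        exact le_of_lt (div_pos (by linarith) (by linarith))
      have hne : s₀ ≠ 0 := ne_of_gt hs₀
      have : (-f x / (2 * s₀)) * s₀ = -f x / 2 := by field_simp
      rw [this] at hfactor
      linarith
  · -- right inequality
    intro s q hs1 hs hq hqle
    by_cases hcase : a < s - q
    · have hmvt := mvt_aux' f hf (s - q) s (by linarith)
        (fun z hz => hdiff1 z ⟨by have := hz.1; linarith, lt_of_lt_of_le hz.2 hs⟩)
        (fun z hz => hlset ⟨by have := hz.1; linarith, lt_of_lt_of_le hz.2 hs⟩)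
      have : min 1 (f y / (2 * (1 - s₀))) * q ≤ 1 * q :=
        mul_le_mul_of_nonneg_right (min_le_left _ _) (le_of_lt hq)
      linarith
    · push_neg at hcase
      have hsq : s - q ∈ Icc (s₀ + η) a := ⟨by
        have : δ ≤ η / 2 := hδη; linarith, hcase⟩
      have hfsq : f y ≤ f (s - q) := hymin hsq
      have hfs : f s < f y / 2 := hball₂ (by
        rw [Real.dist_eq]; rw [abs_of_nonpos (by linarith : s - 1 ≤ 0)]
        linarith)
      have hq2 : q ≤ 1 - s₀ := by linarith
      have hfactor : min 1 (f y / (2 * (1 - s₀))) * q ≤ (f y / (2 * (1 - s₀))) * (1 - s₀) := by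
        apply mul_le_mul (min_le_right _ _) hq2 (le_of_lt hq)
        exact le_of_lt (div_pos (by linarith) (by linarith))
      have hne : (1:ℝ) - s₀ ≠ 0 := by intro h; rw [sub_eq_zero] at h; linarith
      have : (f y / (2 * (1 - s₀))) * (1 - s₀) = f y / 2 := by
        field_simp
      rw [this] at hfactor
      linarith
end

section
/- Let c ∈ ℝ, f : ℝ → ℝ continuous, F(r)=∫₀^r f, and let v : [a,b] × [0,T] → ℝ be a C^{2,1} solution of v_t = v_zz + c v_z + f(v) satisfying for every t ∈ [0,T]: v(a,t) = 0, v(b,t) = 1, v_z(a,t) = v_z(b,t) = 0. Define E(t) = ∫_a^b [½ v_z(z,t)² - F(v(z,t))] e^{cz} dz. Then E is differentiable on [0,T] with E'(t) = -∫_a^b v_t(z,t)² e^{cz} dz ≤ 0. -/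
open Filter Set intervalIntegral

/-!
Differentiating `E` under the integral sign would need the mixed derivative `v_zt`, which is not
available. Instead the increment `E(τ) - E(t)` is computed exactly: write
`(v_z(τ)² - v_z(t)²) / 2 = (v(τ) - v(t))_z · (v_z(τ) + v_z(t)) / 2` and integrate by parts against
`e^{cz}`. The boundary term vanishes because `v(τ) - v(t)` vanishes at `a` and `b`, and the
`z`-derivatives recombine into `v_zz + c v_z = v_t - f(v)`. Divided by `τ - t`, the new integrand
is bounded by the mean value theorem and tends pointwise to `-v_t² e^{cz}`, so dominated
convergence gives `E'(t)`.
-/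

open Topology MeasureTheory Real

theorem integral_deriv_mul_mul_exp_eq_neg {w w' g g' : ℝ → ℝ} {a b : ℝ} (c : ℝ)
    (hw : ∀ z ∈ uIcc a b, HasDerivAt w (w' z) z) (hg : ∀ z ∈ uIcc a b, HasDerivAt g (g' z) z)
    (hw' : IntervalIntegrable w' volume a b) (hg' : IntervalIntegrable g' volume a b)
    (ha : w a = 0) (hb : w b = 0) :
    ∫ z in a..b, w' z * g z * exp (c * z) =
      -∫ z in a..b, w z * (g' z + c * g z) * exp (c * z) := by
  have hexp (z : ℝ) : HasDerivAt (fun z => exp (c * z)) (exp (c * z) * c) z :=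
    ((hasDerivAt_id z).const_mul c).exp.congr_deriv (by simp)
  have hg_cont : ContinuousOn g (uIcc a b) := fun z hz =>
    (hg z hz).continuousAt.continuousWithinAt
  have h := integral_mul_deriv_eq_deriv_mul hw
    (fun z hz => ((hg z hz).mul (hexp z)).congr_deriv (by ring) :
      ∀ z ∈ uIcc a b, HasDerivAt (fun z => g z * exp (c * z)) ((g' z + c * g z) * exp (c * z)) z)
    hw' ((hg'.add (hg_cont.intervalIntegrable.const_mul c)).mul_continuousOn
      (continuous_exp.comp (continuous_const_mul c)).continuousOn)
  simp only [ha, hb, zero_mul, sub_zero, zero_sub, mul_assoc, Pi.mul_apply] at h ⊢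
  rw [h, neg_neg]

noncomputable def weightedEnergy (c a b : ℝ) (F u : ℝ → ℝ) : ℝ :=
  ∫ z in a..b, (deriv u z ^ 2 / 2 - F (u z)) * exp (c * z)

theorem weightedEnergy_sub_weightedEnergy {F u₁ u₂ : ℝ → ℝ} {a b : ℝ} (c : ℝ) (hF : Continuous F)
    (hu₁ : ∀ z ∈ uIcc a b, DifferentiableAt ℝ u₁ z ∧ DifferentiableAt ℝ (deriv u₁) z)
    (hu₂ : ∀ z ∈ uIcc a b, DifferentiableAt ℝ u₂ z ∧ DifferentiableAt ℝ (deriv u₂) z)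
    (hu₁'' : ContinuousOn (deriv (deriv u₁)) (uIcc a b))
    (hu₂'' : ContinuousOn (deriv (deriv u₂)) (uIcc a b))
    (ha : u₁ a = u₂ a) (hb : u₁ b = u₂ b) :
    weightedEnergy c a b F u₁ - weightedEnergy c a b F u₂ =
      -∫ z in a..b, ((u₁ z - u₂ z) *
          ((deriv (deriv u₁) z + c * deriv u₁ z + (deriv (deriv u₂) z + c * deriv u₂ z)) / 2)
        + (F (u₁ z) - F (u₂ z))) * exp (c * z) := by
  have hc₁ : ContinuousOn u₁ (uIcc a b) := fun z hz => (hu₁ z hz).1.continuousAt.continuousWithinAt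
  have hc₂ : ContinuousOn u₂ (uIcc a b) := fun z hz => (hu₂ z hz).1.continuousAt.continuousWithinAt
  have hc₁' : ContinuousOn (deriv u₁) (uIcc a b) := fun z hz =>
    (hu₁ z hz).2.continuousAt.continuousWithinAt
  have hc₂' : ContinuousOn (deriv u₂) (uIcc a b) := fun z hz =>
    (hu₂ z hz).2.continuousAt.continuousWithinAt
  have hparts := integral_deriv_mul_mul_exp_eq_neg c
    (w := fun z => u₁ z - u₂ z) (g := fun z => (deriv u₁ z + deriv u₂ z) / 2)
    (fun z hz => (hu₁ z hz).1.hasDerivAt.sub (hu₂ z hz).1.hasDerivAt)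
    (fun z hz => ((hu₁ z hz).2.hasDerivAt.add (hu₂ z hz).2.hasDerivAt).div_const 2)
    (hc₁'.sub hc₂').intervalIntegrable ((hu₁''.add hu₂'').div_const 2).intervalIntegrable
    (sub_eq_zero.2 ha) (sub_eq_zero.2 hb)
  have hF₁ := hF.comp_continuousOn hc₁
  have hF₂ := hF.comp_continuousOn hc₂
  have hi {φ : ℝ → ℝ} (hφ : ContinuousOn φ (uIcc a b)) : IntervalIntegrable φ volume a b :=
    hφ.intervalIntegrable
  calc weightedEnergy c a b F u₁ - weightedEnergy c a b F u₂
      = ∫ z in a..b, (deriv u₁ z - deriv u₂ z) * ((deriv u₁ z + deriv u₂ z) / 2) * exp (c * z)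
          - (F (u₁ z) - F (u₂ z)) * exp (c * z) := by
        rw [weightedEnergy, weightedEnergy,
          ← intervalIntegral.integral_sub (hi (by fun_prop)) (hi (by fun_prop))]
        congr 1 with z
        ring
    _ = _ := by
        rw [intervalIntegral.integral_sub (hi (by fun_prop)) (hi (by fun_prop)), hparts,
          ← intervalIntegral.integral_neg, ← intervalIntegral.integral_neg,
          ← intervalIntegral.integral_sub (hi (by fun_prop)) (hi (by fun_prop))]
        congr 1 with z
        ring

theorem hasDerivWithinAt_of_sub_eq_integral {E B g : ℝ → ℝ} {G : ℝ → ℝ → ℝ} {s : Set ℝ}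
    {a b t : ℝ} (hE : ∀ τ ∈ s, E τ - E t = ∫ z in a..b, G τ z)
    (hG : ∀ τ ∈ s, ContinuousOn (G τ) (uIcc a b)) (hB : IntervalIntegrable B volume a b)
    (hGB : ∀ τ ∈ s, ∀ z ∈ uIcc a b, |G τ z| ≤ B z * |τ - t|)
    (hlim : ∀ z ∈ uIcc a b, Tendsto (fun τ => (τ - t)⁻¹ * G τ z) (𝓝[s \ {t}] t) (𝓝 (g z))) :
    HasDerivWithinAt E (∫ z in a..b, g z) s t := by
  rw [hasDerivWithinAt_iff_tendsto_slope]
  have hslope : (fun τ => ∫ z in a..b, (τ - t)⁻¹ * G τ z) =ᶠ[𝓝[s \ {t}] t] slope E t := by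
    filter_upwards [self_mem_nhdsWithin] with τ hτ
    rw [slope, vsub_eq_sub, hE τ hτ.1, smul_eq_mul, intervalIntegral.integral_const_mul]
  refine (tendsto_integral_filter_of_dominated_convergence B ?_ ?_ hB ?_).congr' hslope
  · filter_upwards [self_mem_nhdsWithin] with τ hτ
    exact ((continuousOn_const.mul (hG τ hτ.1)).mono uIoc_subset_uIcc).aestronglyMeasurable
      measurableSet_uIoc
  · filter_upwards [self_mem_nhdsWithin] with τ ⟨hτ, hτt⟩
    refine ae_of_all _ fun z hz => ?_
    have hpos : 0 < |τ - t| := abs_pos.2 (sub_ne_zero.2 hτt)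
    rw [norm_mul, norm_inv, Real.norm_eq_abs, Real.norm_eq_abs, inv_mul_le_iff₀ hpos, mul_comm]
    exact hGB τ hτ z (uIoc_subset_uIcc hz)
  · exact ae_of_all _ fun z hz => hlim z (uIoc_subset_uIcc hz)

/-- With `φ = v(z, ·)`, `-(energyIncrement F f φ t τ) * e^{cz}` is the integrand of `E(τ) - E(t)`
after the integration by parts, once `v_zz + c v_z` is replaced by `v_t - f(v)`. -/
noncomputable def energyIncrement (F f φ : ℝ → ℝ) (t τ : ℝ) : ℝ :=
  (φ τ - φ t) * ((deriv φ τ + deriv φ t) / 2 - (f (φ τ) + f (φ t)) / 2) + (F (φ τ) - F (φ t))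

theorem tendsto_inv_mul_energyIncrement {F f φ : ℝ → ℝ} {s : Set ℝ} {t : ℝ}
    (hF : ∀ r, HasDerivAt F (f r) r) (hf : Continuous f) (hφ : DifferentiableAt ℝ φ t)
    (hφ' : ContinuousWithinAt (deriv φ) s t) :
    Tendsto (fun τ => (τ - t)⁻¹ * energyIncrement F f φ t τ) (𝓝[s \ {t}] t)
      (𝓝 (deriv φ t ^ 2)) := by
  have hne : 𝓝[s \ {t}] t ≤ 𝓝[≠] t := nhdsWithin_mono _ fun _ h => h.2
  have hslope := (hasDerivAt_iff_tendsto_slope.1 hφ.hasDerivAt).mono_left hne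
  have hslopeF := (hasDerivAt_iff_tendsto_slope.1
    ((hF (φ t)).comp t hφ.hasDerivAt)).mono_left hne
  have hφ't : Tendsto (deriv φ) (𝓝[s \ {t}] t) (𝓝 (deriv φ t)) :=
    hφ'.tendsto.mono_left (nhdsWithin_mono _ sdiff_subset)
  have hfφ : Tendsto (fun τ => f (φ τ)) (𝓝[s \ {t}] t) (𝓝 (f (φ t))) :=
    ((hf.tendsto _).comp hφ.continuousAt.tendsto).mono_left nhdsWithin_le_nhds
  have h := hslope.mul (((hφ't.add_const (deriv φ t)).div_const 2).sub
    ((hfφ.add_const (f (φ t))).div_const 2)) |>.add hslopeF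
  convert h using 1
  · ext τ
    simp only [energyIncrement, slope_def_field, Function.comp]
    ring
  · congr 1
    ring

theorem abs_energyIncrement_le {F f φ : ℝ → ℝ} {s : Set ℝ} {t τ M Mf : ℝ}
    (hF : ∀ r, HasDerivAt F (f r) r) (hs : Convex ℝ s) (hφ : ∀ σ ∈ s, DifferentiableAt ℝ φ σ)
    (hM : ∀ σ ∈ s, |deriv φ σ| ≤ M) (hMf : ∀ σ ∈ s, |f (φ σ)| ≤ Mf) (ht : t ∈ s) (hτ : τ ∈ s) :
    |energyIncrement F f φ t τ| ≤ M * (M + 2 * Mf) * |τ - t| := by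
  have hM₀ : 0 ≤ M := (abs_nonneg _).trans (hM t ht)
  have hMf₀ : 0 ≤ Mf := (abs_nonneg _).trans (hMf t ht)
  have hφ_lip : |φ τ - φ t| ≤ M * |τ - t| := hs.norm_image_sub_le_of_norm_deriv_le hφ hM ht hτ
  have hF_lip : |F (φ τ) - F (φ t)| ≤ Mf * M * |τ - t| :=
    hs.norm_image_sub_le_of_norm_hasDerivWithin_le (f := F ∘ φ)
      (fun σ hσ => ((hF _).comp σ (hφ σ hσ).hasDerivAt).hasDerivWithinAt)
      (fun σ hσ => (abs_mul _ _).trans_le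
        (mul_le_mul (hMf σ hσ) (hM σ hσ) (abs_nonneg _) hMf₀)) ht hτ
  have hmid : |(deriv φ τ + deriv φ t) / 2 - (f (φ τ) + f (φ t)) / 2| ≤ M + Mf := by
    obtain ⟨h₁, h₂⟩ := abs_le.1 (hM τ hτ)
    obtain ⟨h₃, h₄⟩ := abs_le.1 (hM t ht)
    obtain ⟨h₅, h₆⟩ := abs_le.1 (hMf τ hτ)
    obtain ⟨h₇, h₈⟩ := abs_le.1 (hMf t ht)
    exact abs_le.2 ⟨by linarith, by linarith⟩
  calc |energyIncrement F f φ t τ|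
      ≤ |φ τ - φ t| * |(deriv φ τ + deriv φ t) / 2 - (f (φ τ) + f (φ t)) / 2|
        + |F (φ τ) - F (φ t)| := (abs_add_le _ _).trans_eq (by rw [abs_mul])
    _ ≤ M * |τ - t| * (M + Mf) + Mf * M * |τ - t| :=
        add_le_add (mul_le_mul hφ_lip hmid (abs_nonneg _) (by positivity)) hF_lip
    _ = M * (M + 2 * Mf) * |τ - t| := by ring

theorem hasDerivWithinAt_of_sub_eq_integral_energyIncrement {E F f : ℝ → ℝ} {v : ℝ → ℝ → ℝ}
    {a b c t : ℝ} {s : Set ℝ} (hab : a ≤ b) (hs : IsCompact s) (hs_conv : Convex ℝ s)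
    (ht : t ∈ s) (hF : ∀ r, HasDerivAt F (f r) r) (hf : Continuous f)
    (hv : ContinuousOn (fun p : ℝ × ℝ => v p.1 p.2) (Icc a b ×ˢ s))
    (hvt : ContinuousOn (fun p : ℝ × ℝ => deriv (v p.1) p.2) (Icc a b ×ˢ s))
    (hv_t : ∀ z ∈ Icc a b, ∀ τ ∈ s, DifferentiableAt ℝ (v z) τ)
    (hE : ∀ τ ∈ s, E τ - E t = ∫ z in a..b, -(energyIncrement F f (v z) t τ * exp (c * z))) :
    HasDerivWithinAt E (-∫ z in a..b, deriv (v z) t ^ 2 * exp (c * z)) s t := by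
  have hI : uIcc a b = Icc a b := uIcc_of_le hab
  have hK : IsCompact (Icc a b ×ˢ s) := isCompact_Icc.prod hs
  obtain ⟨M, hM⟩ := hK.exists_bound_of_continuousOn hvt
  obtain ⟨Mf, hMf⟩ := hK.exists_bound_of_continuousOn (hf.comp_continuousOn hv)
  have hF_cont : Continuous F := continuous_iff_continuousAt.2 fun r => (hF r).continuousAt
  rw [← intervalIntegral.integral_neg]
  refine hasDerivWithinAt_of_sub_eq_integral hE (B := fun z => M * (M + 2 * Mf) * exp (c * z))
    ?_ (Continuous.intervalIntegrable (by fun_prop) _ _) ?_ ?_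
  · intro τ hτ
    rw [hI]
    have := hv.uncurry_right (f := v) τ hτ
    have := hv.uncurry_right (f := v) t ht
    have := hvt.uncurry_right (f := fun z σ => deriv (v z) σ) τ hτ
    have := hvt.uncurry_right (f := fun z σ => deriv (v z) σ) t ht
    simp only [energyIncrement]
    fun_prop
  · intro τ hτ z hz
    rw [hI] at hz
    rw [abs_neg, abs_mul, abs_of_pos (exp_pos _)]
    have := abs_energyIncrement_le hF hs_conv (hv_t z hz)
      (fun σ hσ => hM (z, σ) ⟨hz, hσ⟩) (fun σ hσ => hMf (z, σ) ⟨hz, hσ⟩) ht hτ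
    exact (mul_le_mul_of_nonneg_right this (exp_pos _).le).trans_eq (by ring)
  · intro z hz
    rw [hI] at hz
    refine ((tendsto_inv_mul_energyIncrement hF hf (hv_t z hz t ht)
      ((hvt.uncurry_left (f := fun z σ => deriv (v z) σ) z hz) t ht)).mul_const
      (exp (c * z))).neg.congr fun τ => ?_
    ring

theorem stmt_16_general (c a b T : ℝ) (hab : a < b)
    (f : ℝ → ℝ) (hf : Continuous f)
    (v : ℝ → ℝ → ℝ)
    (hv_cont : ContinuousOn (fun p : ℝ × ℝ => v p.1 p.2) (Icc a b ×ˢ Icc 0 T))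
    (hvzz_cont : ContinuousOn (fun p : ℝ × ℝ => deriv (deriv (fun x => v x p.2)) p.1)
      (Icc a b ×ˢ Icc 0 T))
    (hvt_cont : ContinuousOn (fun p : ℝ × ℝ => deriv (fun τ => v p.1 τ) p.2)
      (Icc a b ×ˢ Icc 0 T))
    (hv_z : ∀ z ∈ Icc a b, ∀ t ∈ Icc (0:ℝ) T,
      DifferentiableAt ℝ (fun x => v x t) z ∧
      DifferentiableAt ℝ (deriv (fun x => v x t)) z)
    (hv_t : ∀ z ∈ Icc a b, ∀ t ∈ Icc (0:ℝ) T,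
      DifferentiableAt ℝ (fun τ => v z τ) t)
    (heq : ∀ z ∈ Icc a b, ∀ t ∈ Icc (0:ℝ) T,
      deriv (fun τ => v z τ) t
        = deriv (deriv (fun x => v x t)) z + c * deriv (fun x => v x t) z + f (v z t))
    (hba : ∀ t ∈ Icc (0:ℝ) T, v a t = 0 ∧ v b t = 1 ∧
      deriv (fun x => v x t) a = 0 ∧ deriv (fun x => v x t) b = 0) :
    ∀ t ∈ Icc (0:ℝ) T,
      HasDerivWithinAt
        (fun τ => ∫ z in a..b,
          ((deriv (fun x => v x τ) z) ^ 2 / 2 - ∫ s in (0:ℝ)..(v z τ), f s)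
            * Real.exp (c * z))
        (-(∫ z in a..b, (deriv (fun τ => v z τ) t) ^ 2 * Real.exp (c * z)))
        (Icc 0 T) t ∧
      -(∫ z in a..b, (deriv (fun τ => v z τ) t) ^ 2 * Real.exp (c * z)) ≤ 0 := by
  intro t ht
  set F : ℝ → ℝ := fun r => ∫ s in (0:ℝ)..r, f s
  have hF (r : ℝ) : HasDerivAt F (f r) r := (hf.integral_hasStrictDerivAt 0 r).hasDerivAt
  have hI : uIcc a b = Icc a b := uIcc_of_le hab.le
  have hvzz (τ : ℝ) (hτ : τ ∈ Icc (0:ℝ) T) :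
      ContinuousOn (deriv (deriv (fun x => v x τ))) (uIcc a b) :=
    hI ▸ hvzz_cont.uncurry_right (f := fun z τ => deriv (deriv (fun x => v x τ)) z) τ hτ
  have hE (τ : ℝ) (hτ : τ ∈ Icc (0:ℝ) T) :
      weightedEnergy c a b F (fun x => v x τ) - weightedEnergy c a b F (fun x => v x t) =
        ∫ z in a..b, -(energyIncrement F f (v z) t τ * exp (c * z)) := by
    rw [weightedEnergy_sub_weightedEnergy c (continuous_iff_continuousAt.2 fun r =>
        (hF r).continuousAt) (hI ▸ fun z hz => hv_z z hz τ hτ) (hI ▸ fun z hz => hv_z z hz t ht)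
      (hvzz τ hτ) (hvzz t ht) (by rw [(hba τ hτ).1, (hba t ht).1])
      (by rw [(hba τ hτ).2.1, (hba t ht).2.1]), ← intervalIntegral.integral_neg]
    refine integral_congr fun z hz => ?_
    rw [hI] at hz
    simp only [energyIncrement]
    linear_combination (v z τ - v z t) * exp (c * z) / 2 * (heq z hz τ hτ + heq z hz t ht)
  exact ⟨hasDerivWithinAt_of_sub_eq_integral_energyIncrement hab.le isCompact_Icc
      (convex_Icc 0 T) ht hF hf hv_cont hvt_cont hv_t hE,
    neg_nonpos.2 (integral_nonneg hab.le fun z _ => by positivity)⟩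

theorem stmt_16 (c a b T : ℝ) (hab : a < b) (hT : 0 < T)
    (f : ℝ → ℝ) (hf : Continuous f)
    (v : ℝ → ℝ → ℝ)
    (hv_cont : ContinuousOn (fun p : ℝ × ℝ => v p.1 p.2) (Icc a b ×ˢ Icc 0 T))
    (hvz_cont : ContinuousOn (fun p : ℝ × ℝ => deriv (fun x => v x p.2) p.1)
      (Icc a b ×ˢ Icc 0 T))
    (hvzz_cont : ContinuousOn (fun p : ℝ × ℝ => deriv (deriv (fun x => v x p.2)) p.1)
      (Icc a b ×ˢ Icc 0 T))
    (hvt_cont : ContinuousOn (fun p : ℝ × ℝ => deriv (fun τ => v p.1 τ) p.2)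
      (Icc a b ×ˢ Icc 0 T))
    (hv_z : ∀ z ∈ Icc a b, ∀ t ∈ Icc (0:ℝ) T,
      DifferentiableAt ℝ (fun x => v x t) z ∧
      DifferentiableAt ℝ (deriv (fun x => v x t)) z)
    (hv_t : ∀ z ∈ Icc a b, ∀ t ∈ Icc (0:ℝ) T,
      DifferentiableAt ℝ (fun τ => v z τ) t)
    (heq : ∀ z ∈ Icc a b, ∀ t ∈ Icc (0:ℝ) T,
      deriv (fun τ => v z τ) t
        = deriv (deriv (fun x => v x t)) z + c * deriv (fun x => v x t) z + f (v z t))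
    (hba : ∀ t ∈ Icc (0:ℝ) T, v a t = 0 ∧ v b t = 1 ∧
      deriv (fun x => v x t) a = 0 ∧ deriv (fun x => v x t) b = 0) :
    ∀ t ∈ Icc (0:ℝ) T,
      HasDerivWithinAt
        (fun τ => ∫ z in a..b,
          ((deriv (fun x => v x τ) z) ^ 2 / 2 - ∫ s in (0:ℝ)..(v z τ), f s)
            * Real.exp (c * z))
        (-(∫ z in a..b, (deriv (fun τ => v z τ) t) ^ 2 * Real.exp (c * z)))
        (Icc 0 T) t ∧
      -(∫ z in a..b, (deriv (fun τ => v z τ) t) ^ 2 * Real.exp (c * z)) ≤ 0 :=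
  stmt_16_general c a b T hab f hf v hv_cont hvzz_cont hvt_cont hv_z hv_t heq hba
end
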